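/- With M_k the inductively defined matrix product (M_0 = I, M_k(σ) = A^{1-σ_k} B^{σ_k} M_{k-1}(σ')) and h_k the number-theoretical spin chain function (h_0 = 1, h_{k+1}(σ,s) = h_k(σ) + s·h_k(1-σ)), one has Trace([[1,0],[1,0]] · M_k(σ)) = h_k(σ) for all σ ∈ {0,1}^k. -/
import Mathlib


open Matrix

namespace Farey

def A : Matrix (Fin 2) (Fin 2) ℤ := !![1, 0; 1, 1]
def B : Matrix (Fin 2) (Fin 2) ℤ := !![1, 1; 0, 1]

/-- The Farey spin chain matrix product: `M 0 = 1`,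
`M (k+1) σ = A^(1-σ_(k+1)) B^(σ_(k+1)) * M k (σ_1,…,σ_k)`. -/
def M : (k : ℕ) → (Fin k → Bool) → Matrix (Fin 2) (Fin 2) ℤ
  | 0, _ => 1
  | k + 1, σ => (if σ (Fin.last k) then B else A) * M k (fun i => σ i.castSucc)

/-- The canonical energy numerator of the number-theoretical spin chain:
`h 0 = 1`, `h (k+1) (σ, s) = h k σ + s * h k (1-σ)`. -/
def h : (k : ℕ) → (Fin k → Bool) → ℕ
  | 0, _ => 1
  | k + 1, σ =>
      h k (fun i => σ i.castSucc) +
        if σ (Fin.last k) then h k (fun i => !σ i.castSucc) else 0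


lemma rows_M (k : ℕ) (σ : Fin k → Bool) :
    M k σ 0 0 + M k σ 0 1 = (h k σ : ℤ) ∧
    M k σ 1 0 + M k σ 1 1 = (h k (fun i => !σ i) : ℤ) := by
  induction k with
  | zero => simp [M, h, Matrix.one_apply]
  | succ k ih =>
    obtain ⟨h1, h2⟩ := ih (fun i => σ i.castSucc)
    by_cases hs : σ (Fin.last k) <;>
      simp only [M, h, hs, if_true, if_false, Bool.not_true, Bool.not_false,
        Matrix.mul_apply, Fin.sum_univ_two, A, B, Matrix.cons_val', Matrix.cons_val_zero,
        Matrix.cons_val_one, Matrix.head_cons, Matrix.empty_val', Matrix.cons_val_fin_one,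
        Matrix.head_fin_const] <;>
      constructor <;>
      · norm_num [Bool.not_not]
        linarith [h1, h2]

/-- `Trace ([[1,0],[1,0]] * M_k(σ)) = h_k(σ)`. -/
theorem trace_proj_M (k : ℕ) (σ : Fin k → Bool) :
    ((!![1, 0; 1, 0] : Matrix (Fin 2) (Fin 2) ℤ) * M k σ).trace = (h k σ : ℤ) := by
  obtain ⟨h1, _⟩ := rows_M k σ
  simp [Matrix.trace, Matrix.mul_apply, Fin.sum_univ_two, Matrix.diag]
  linarith [h1]

end Farey
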